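/- Let A be a T-brace. Then for every natural number n, the additive group of ζ_n(⋆,A)/ζ(⋆,A) is periodic; that is, for every a ∈ ζ_n(⋆,A) there is a positive integer m with ma ∈ ζ(⋆,A). -/

import Mathlib

/-!
Basic theory of left braces (skew left braces of abelian type), following
Dixon–Kurdachenko–Subbotin, "On the structure of braces whose subideals are ideals".
-/

universe u v

/-- A left brace: an abelian group `(A,+)`, a group `(A,·)`, satisfying
`a(b+c) = ab + ac - a`.  (The additive and multiplicative identities then coincide.) -/
class LeftBrace (A : Type u) extends AddCommGroup A, Group A where
  mul_add_eq : ∀ a b c : A, a * (b + c) = a * b + a * c - a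

namespace LeftBrace

variable {A : Type u} [LeftBrace A]

/-- The star operation `a ⋆ b = ab - a - b`. -/
def bstar (a b : A) : A := a * b - a - b

/-- A subset of a left brace is a subbrace if it is closed under the additive-group
and multiplicative-group operations (equivalently, it is a left brace under the
restricted operations). -/
structure IsSubbrace (S : Set A) : Prop where
  zero_mem : (0 : A) ∈ S
  add_mem : ∀ {a b : A}, a ∈ S → b ∈ S → a + b ∈ S
  neg_mem : ∀ {a : A}, a ∈ S → -a ∈ S
  mul_mem : ∀ {a b : A}, a ∈ S → b ∈ S → a * b ∈ S
  inv_mem : ∀ {a : A}, a ∈ S → a⁻¹ ∈ S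

/-- `I` is an ideal of the subbrace `J`: `I ⊆ J`, both are subbraces, and
`a ⋆ z, z ⋆ a ∈ I` for all `a ∈ J`, `z ∈ I`. -/
structure IsIdealIn (I J : Set A) : Prop where
  subset : I ⊆ J
  subbrace : IsSubbrace I
  ambient_subbrace : IsSubbrace J
  star_mem_left : ∀ a ∈ J, ∀ z ∈ I, bstar a z ∈ I
  star_mem_right : ∀ a ∈ J, ∀ z ∈ I, bstar z a ∈ I

/-- `I` is an ideal of the brace `A`. -/
def IsIdeal (I : Set A) : Prop := IsIdealIn I (Set.univ : Set A)

/-- `A` is a T-brace if being an ideal is a transitive relation: an ideal of an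
ideal of `A` is an ideal of `A`. -/
def IsTBrace (A : Type u) [LeftBrace A] : Prop :=
  ∀ I J : Set A, IsIdealIn I J → IsIdeal J → IsIdeal I

/-- The `⋆`-center `ζ(⋆,A) = {a | a ⋆ x = x ⋆ a = 0 for all x}`. -/
def starCenter (A : Type u) [LeftBrace A] : Set A :=
  {a : A | ∀ x : A, bstar a x = 0 ∧ bstar x a = 0}

/-- The preimage in `A` of the `⋆`-center of the quotient of `A` by (the ideal) `S`:
`a` belongs to it iff `a ⋆ x ∈ S` and `x ⋆ a ∈ S` for every `x ∈ A`. -/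
def nextCenter (A : Type u) [LeftBrace A] (S : Set A) : Set A :=
  {a : A | ∀ x : A, bstar a x ∈ S ∧ bstar x a ∈ S}

/-- The upper `⋆`-central series, indexed by naturals:
`ζ₀(⋆,A) = 0` and `ζ_{n+1}(⋆,A)/ζ_n(⋆,A) = ζ(⋆, A/ζ_n(⋆,A))`. -/
def zetaNat (A : Type u) [LeftBrace A] : ℕ → Set A
  | 0 => ({0} : Set A)
  | n + 1 => nextCenter A (zetaNat A n)

/-- The upper `⋆`-central series, indexed by ordinals (unions at limit ordinals). -/
noncomputable def zetaOrd (A : Type u) [LeftBrace A] (o : Ordinal.{v}) : Set A :=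
  Ordinal.limitRecOn o (({0} : Set A))
    (fun _ ih => nextCenter A ih)
    (fun o _ ih => ⋃ (o' : Ordinal) (h : o' < o), ih o' h)

/-- The upper `⋆`-hypercenter `ζ_∞(⋆,A)`: the final (stable) term of the upper
`⋆`-central series, i.e. the union of all its terms. -/
noncomputable def starHypercenter (A : Type u) [LeftBrace A] : Set A :=
  ⋃ o : Ordinal.{u}, zetaOrd A o

/-- `A` is `⋆`-hypercentral if `A = ζ_γ(⋆,A)` for some ordinal `γ`. -/
def IsStarHypercentral (A : Type u) [LeftBrace A] : Prop :=
  ∃ γ : Ordinal.{u}, zetaOrd A γ = (Set.univ : Set A)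

/-- `K ⋆ L`: the additive subgroup of `(A,+)` generated by all `x ⋆ y`, `x ∈ K`, `y ∈ L`. -/
def setStar (K L : Set A) : AddSubgroup A :=
  AddSubgroup.closure {z : A | ∃ x ∈ K, ∃ y ∈ L, z = bstar x y}

/-- `rightStarSeries A n = A^{(n+1)}`, where `A^{(1)} = A` and `A^{(n+1)} = A^{(n)} ⋆ A`. -/
def rightStarSeries (A : Type u) [LeftBrace A] : ℕ → Set A
  | 0 => (Set.univ : Set A)
  | n + 1 => ((setStar (rightStarSeries A n) (Set.univ : Set A) : AddSubgroup A) : Set A)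

/-- `leftStarSeries A n = A^{n+1}`, where `A^1 = A` and `A^{n+1} = A ⋆ A^n`. -/
def leftStarSeries (A : Type u) [LeftBrace A] : ℕ → Set A
  | 0 => (Set.univ : Set A)
  | n + 1 => ((setStar (Set.univ : Set A) (leftStarSeries A n) : AddSubgroup A) : Set A)

/-- `A` is Smoktunowicz-nilpotent if `A^{(n)} = A^k = 0` for some naturals `n, k`. -/
def IsSmoktunowiczNilpotent (A : Type u) [LeftBrace A] : Prop :=
  ∃ n k : ℕ, rightStarSeries A n = ({0} : Set A) ∧ leftStarSeries A k = ({0} : Set A)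

/-- The subbrace generated by a subset `M`: the intersection of all subbraces containing `M`. -/
def braceClosure (M : Set A) : Set A := ⋂₀ {S : Set A | IsSubbrace S ∧ M ⊆ S}

end LeftBrace

/-
Two steps down the upper `⋆`-central series, `⋆` is bilinear modulo `ζ_k`: for `a, b ∈ ζ_{k+2}`
one has `(a + b) ⋆ x ≡ a ⋆ x + b ⋆ x`, and `x ↦ a ⋆ x` is always additive. By induction on `n`
it suffices to show that every `a ∈ ζ_{k+2}` has a positive multiple in `ζ_{k+1}`.

Suppose it has none. Lying between `ζ_{k+1}` and `ζ_{k+2}`, `ℤa + ζ_{k+1}` is an ideal of the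
ideal `ζ_{k+2}`, and `I = ℤa + ℤ(a ⋆ a) + ζ_k` is an ideal of it; both are ideals of `A` by
transitivity. As `a ⋆ x` and `x ⋆ a` lie in `I ∩ ζ_{k+1}`, they are congruent to multiples
`t (a ⋆ a)` modulo `ζ_k`. If `r (a ⋆ a) ∈ ζ_k` for some `r ≠ 0`, this forces `r a ∈ ζ_{k+1}`.
Otherwise, running the same argument for `j a`, whose self-product is `≡ j² (a ⋆ a)`, shows that
`j ∣ t` for every `j ≠ 0`; so `t = 0` and `a ∈ ζ_{k+1}`, a contradiction.
-/

theorem AddSubgroup.exists_nsmul_mem_of_zsmul_mem {G : Type*} [AddGroup G] {S : AddSubgroup G}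
    {g : G} {s : ℤ} (hs : s ≠ 0) (h : s • g ∈ S) : ∃ m : ℕ, 0 < m ∧ m • g ∈ S := by
  refine ⟨s.natAbs, Int.natAbs_pos.2 hs, ?_⟩
  rcases Int.natAbs_eq s with h' | h'
  · rwa [h', natCast_zsmul] at h
  · rwa [h', neg_zsmul, neg_mem_iff, natCast_zsmul] at h

namespace LeftBrace

variable {A : Type u} [LeftBrace A]

section Identities

theorem one_eq_zero : (1 : A) = 0 := by
  have h := mul_add_eq (1 : A) 0 0
  simp only [one_mul, add_zero] at h
  linear_combination (norm := abel1) h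

theorem zero_mul' (a : A) : 0 * a = a := by
  rw [← one_eq_zero, one_mul]

theorem mul_eq_bstar_add_add (a b : A) : a * b = bstar a b + a + b := by
  simp only [bstar]
  abel

def bstarHom (a : A) : A →+ A :=
  AddMonoidHom.mk' (bstar a) fun b c => by
    simp only [bstar, mul_add_eq]
    abel

theorem bstar_add_right (a b c : A) : bstar a (b + c) = bstar a b + bstar a c :=
  (bstarHom a).map_add b c

theorem bstar_zero_right (a : A) : bstar a 0 = 0 := (bstarHom a).map_zero

theorem bstar_neg_right (a b : A) : bstar a (-b) = -bstar a b := (bstarHom a).map_neg b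

theorem bstar_zsmul_right (a b : A) (m : ℤ) : bstar a (m • b) = m • bstar a b :=
  (bstarHom a).map_zsmul m b

theorem bstar_zero_left (x : A) : bstar 0 x = 0 := by
  simp [bstar, zero_mul']

theorem bstar_mul_left (a b c : A) :
    bstar (a * b) c = bstar a (bstar b c) + bstar b c + bstar a c := by
  have h : a * (b * c - b - c) = a * (b * c) - a * b - a * c + a + a := by
    have h₁ := mul_add_eq a (b * c - b - c) (b + c)
    rw [show b * c - b - c + (b + c) = b * c by abel, mul_add_eq] at h₁
    linear_combination (norm := abel1) -h₁
  simp only [bstar]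
  rw [h, mul_assoc]
  abel

theorem inv_eq_neg_sub_bstar (a : A) : a⁻¹ = -a - bstar a a⁻¹ := by
  have h := mul_eq_bstar_add_add a a⁻¹
  rw [mul_inv_cancel, one_eq_zero] at h
  linear_combination (norm := abel1) -h

theorem bstar_inv_left (a x : A) : bstar a⁻¹ x = -bstar a (bstar a⁻¹ x) - bstar a x := by
  have h := bstar_mul_left a a⁻¹ x
  rw [mul_inv_cancel, one_eq_zero, bstar_zero_left] at h
  linear_combination (norm := abel1) -h

theorem add_eq_mul_add_bstar_inv (v t : A) : v + t = t * (v + bstar t⁻¹ v) := by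
  have h : v + bstar t⁻¹ v = t⁻¹ * (t + v) := by
    rw [mul_add_eq, inv_mul_cancel, one_eq_zero, bstar]
    abel
  rw [h, ← mul_assoc, mul_inv_cancel, one_eq_zero, zero_mul', add_comm]

end Identities

section CentralSeries

theorem nextCenter_mono {S T : Set A} (h : S ⊆ T) : nextCenter A S ⊆ nextCenter A T :=
  fun _ ha x => ⟨h (ha x).1, h (ha x).2⟩

theorem zetaNat_subset_succ (n : ℕ) : zetaNat A n ⊆ zetaNat A (n + 1) := by
  induction n with
  | zero =>
    rintro _ rfl x
    exact ⟨bstar_zero_left x, bstar_zero_right x⟩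
  | succ n ih => exact nextCenter_mono ih

/-- This makes `nextCenter A S` additively closed and passes from `S` to `nextCenter A S`,
so it is carried along the upper `⋆`-central series. -/
def LeftStarCompat (S : Set A) : Prop :=
  ∀ v x : A, ∀ t ∈ nextCenter A S, bstar (v + t) x - bstar v x ∈ S

theorem bstar_add_left_sub_eq (v t x : A) :
    bstar (v + t) x - bstar v x =
      bstar t (bstar (v + bstar t⁻¹ v) x) + bstar t x +
        (bstar (v + bstar t⁻¹ v) x - bstar v x) := by
  conv_lhs => rw [add_eq_mul_add_bstar_inv v t, bstar_mul_left]
  abel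

variable {S : AddSubgroup A}

theorem bstar_inv_left_mem {t : A} (ht : t ∈ nextCenter A S) (v : A) : bstar t⁻¹ v ∈ S := by
  rw [bstar_inv_left]
  exact sub_mem (neg_mem (ht _).1) (ht v).1

theorem leftStarCompat_bot : LeftStarCompat ((⊥ : AddSubgroup A) : Set A) := by
  intro v x t ht
  have hz : ∀ y, bstar t y = 0 := fun y => AddSubgroup.mem_bot.1 (ht y).1
  rw [bstar_add_left_sub_eq, AddSubgroup.mem_bot.1 (bstar_inv_left_mem ht v)]
  simp [hz]

theorem nextCenter_add_mem (hS : LeftStarCompat (S : Set A)) {a b : A}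
    (ha : a ∈ nextCenter A S) (hb : b ∈ nextCenter A S) : a + b ∈ nextCenter A S := fun x => by
  refine ⟨?_, by rw [bstar_add_right]; exact add_mem (ha x).2 (hb x).2⟩
  have h := add_mem (hS b x a ha) (hb x).1
  rwa [sub_add_cancel, add_comm] at h

theorem nextCenter_neg_mem (hS : LeftStarCompat (S : Set A)) {a : A}
    (ha : a ∈ nextCenter A S) : -a ∈ nextCenter A S := fun x => by
  refine ⟨?_, by rw [bstar_neg_right]; exact neg_mem (ha x).2⟩
  have h := neg_mem (hS (-a) x a ha)
  rwa [neg_add_cancel, bstar_zero_left, zero_sub, neg_neg] at h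

def nextCenterAddSubgroup (S : AddSubgroup A) (hS : LeftStarCompat (S : Set A)) :
    AddSubgroup A where
  carrier := nextCenter A S
  zero_mem' x := by
    rw [bstar_zero_left, bstar_zero_right]
    exact ⟨zero_mem S, zero_mem S⟩
  add_mem' := nextCenter_add_mem hS
  neg_mem' := nextCenter_neg_mem hS

theorem leftStarCompat_nextCenter (hS : LeftStarCompat (S : Set A))
    (hle : (S : Set A) ⊆ nextCenter A S) : LeftStarCompat (nextCenter A S) := by
  intro v x t ht
  let T := nextCenterAddSubgroup S hS
  have hw : bstar t⁻¹ v ∈ T := bstar_inv_left_mem (S := T) ht v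
  rw [bstar_add_left_sub_eq]
  exact T.add_mem (T.add_mem (ht _).1 (ht x).1) (hle (hS v x _ hw))

theorem exists_addSubgroup_coe_eq_zetaNat (n : ℕ) :
    ∃ S : AddSubgroup A, (S : Set A) = zetaNat A n ∧ LeftStarCompat (S : Set A) := by
  induction n with
  | zero => exact ⟨⊥, AddSubgroup.coe_bot, leftStarCompat_bot⟩
  | succ n ih =>
    obtain ⟨S, hSn, hS⟩ := ih
    refine ⟨nextCenterAddSubgroup S hS, by rw [zetaNat, ← hSn]; rfl,
      leftStarCompat_nextCenter hS ?_⟩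
    rw [hSn]
    exact zetaNat_subset_succ n

end CentralSeries

noncomputable def zetaSubgroup (A : Type u) [LeftBrace A] (n : ℕ) : AddSubgroup A :=
  (exists_addSubgroup_coe_eq_zetaNat n).choose.copy (zetaNat A n)
    (exists_addSubgroup_coe_eq_zetaNat n).choose_spec.1.symm

section ZetaSubgroup

variable {n : ℕ}

theorem mem_zetaSubgroup_succ {a : A} :
    a ∈ zetaSubgroup A (n + 1) ↔
      ∀ x, bstar a x ∈ zetaSubgroup A n ∧ bstar x a ∈ zetaSubgroup A n := Iff.rfl

theorem zetaSubgroup_mono : Monotone (zetaSubgroup A) :=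
  monotone_nat_of_le_succ zetaNat_subset_succ

theorem bstar_mem_zetaSubgroup {a : A} (ha : a ∈ zetaSubgroup A n) (x : A) :
    bstar a x ∈ zetaSubgroup A n ∧ bstar x a ∈ zetaSubgroup A n :=
  mem_zetaSubgroup_succ.1 (zetaNat_subset_succ n ha) x

theorem bstar_add_left_sub_mem (v x : A) {t : A} (ht : t ∈ zetaSubgroup A (n + 1)) :
    bstar (v + t) x - bstar v x ∈ zetaSubgroup A n := by
  obtain ⟨hS, h⟩ := (exists_addSubgroup_coe_eq_zetaNat (A := A) n).choose_spec
  rw [hS] at h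
  exact h v x t ht

end ZetaSubgroup

section LeftAdditivity

variable {n : ℕ}

theorem bstar_add_left_sub_sub_mem (x : A) {a b : A} (ha : a ∈ zetaSubgroup A (n + 2))
    (hb : b ∈ zetaSubgroup A (n + 2)) :
    bstar (a + b) x - (bstar a x + bstar b x) ∈ zetaSubgroup A n := by
  have hab : -bstar a b ∈ zetaSubgroup A (n + 1) := neg_mem (mem_zetaSubgroup_succ.1 ha b).1
  have h := bstar_add_left_sub_mem (a * b) x hab
  rw [show a * b + -bstar a b = a + b by rw [mul_eq_bstar_add_add]; abel,
    bstar_mul_left] at h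
  have hbx : bstar a (bstar b x) ∈ zetaSubgroup A n :=
    (mem_zetaSubgroup_succ.1 (mem_zetaSubgroup_succ.1 hb x).1 a).2
  convert add_mem h hbx using 1
  abel

noncomputable def bstarLeftHom (n : ℕ) (x : A) :
    zetaSubgroup A (n + 2) →+ A ⧸ zetaSubgroup A n :=
  AddMonoidHom.mk' (fun a => QuotientAddGroup.mk (bstar (a : A) x)) fun a b => by
    rw [← QuotientAddGroup.mk_add, QuotientAddGroup.eq_iff_sub_mem]
    exact bstar_add_left_sub_sub_mem x a.2 b.2

theorem bstar_zsmul_left_sub_mem (x : A) {a : A} (ha : a ∈ zetaSubgroup A (n + 2)) (m : ℤ) :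
    bstar (m • a) x - m • bstar a x ∈ zetaSubgroup A n := by
  have h := (bstarLeftHom n x).map_zsmul m ⟨a, ha⟩
  change (QuotientAddGroup.mk (bstar (m • a) x) : A ⧸ zetaSubgroup A n) =
    m • QuotientAddGroup.mk (bstar a x) at h
  rwa [← QuotientAddGroup.mk_zsmul, QuotientAddGroup.eq_iff_sub_mem] at h

end LeftAdditivity

section Ideals

theorem isSubbrace_of_bstar_mem {S : AddSubgroup A} (hstar : ∀ a ∈ S, ∀ b ∈ S, bstar a b ∈ S)
    (hinv : ∀ a ∈ S, bstar a a⁻¹ ∈ S) : IsSubbrace (S : Set A) where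
  zero_mem := S.zero_mem
  add_mem := S.add_mem
  neg_mem := S.neg_mem
  mul_mem {a b} ha hb := by
    rw [mul_eq_bstar_add_add]
    exact S.add_mem (S.add_mem (hstar a ha b hb) ha) hb
  inv_mem {a} ha := by
    rw [inv_eq_neg_sub_bstar]
    exact S.sub_mem (S.neg_mem ha) (hinv a ha)

theorem isIdealIn_of_bstar_mem {S J : AddSubgroup A} (hSJ : S ≤ J)
    (hJ : IsSubbrace (J : Set A)) (h : ∀ a ∈ J, ∀ z ∈ S, bstar a z ∈ S ∧ bstar z a ∈ S) :
    IsIdealIn (S : Set A) J where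
  subset := hSJ
  subbrace := isSubbrace_of_bstar_mem (fun a ha b hb => (h a (hSJ ha) b hb).1)
    fun a ha => (h a⁻¹ (hJ.inv_mem (hSJ ha)) a ha).2
  ambient_subbrace := hJ
  star_mem_left a ha z hz := (h a ha z hz).1
  star_mem_right a ha z hz := (h a ha z hz).2

theorem isIdeal_of_bstar_mem {S : AddSubgroup A}
    (h : ∀ a, ∀ z ∈ S, bstar a z ∈ S ∧ bstar z a ∈ S) : IsIdeal (S : Set A) := by
  have hA : IsSubbrace ((⊤ : AddSubgroup A) : Set A) :=
    isSubbrace_of_bstar_mem (fun _ _ _ _ => trivial) fun _ _ => trivial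
  have hS := isIdealIn_of_bstar_mem le_top hA fun a _ z hz => h a z hz
  rwa [AddSubgroup.coe_top] at hS

variable {k n : ℕ}

theorem isIdeal_zetaSubgroup (n : ℕ) : IsIdeal (zetaSubgroup A n : Set A) :=
  isIdeal_of_bstar_mem fun a _ hz => (bstar_mem_zetaSubgroup hz a).symm

theorem isIdeal_of_zetaSubgroup_le (hT : IsTBrace A) {S : AddSubgroup A}
    (hlo : zetaSubgroup A n ≤ S) (hhi : S ≤ zetaSubgroup A (n + 1)) : IsIdeal (S : Set A) := by
  have hS : IsIdealIn (S : Set A) (zetaSubgroup A (n + 1)) :=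
    isIdealIn_of_bstar_mem hhi (isIdeal_zetaSubgroup (n + 1)).subbrace fun a ha z hz =>
      ⟨hlo (mem_zetaSubgroup_succ.1 ha z).1, hlo (mem_zetaSubgroup_succ.1 (hhi hz) a).1⟩
  exact hT _ _ hS (isIdeal_zetaSubgroup (n + 1))

noncomputable def starSpan (k : ℕ) (b : A) : AddSubgroup A :=
  AddSubgroup.zmultiples b ⊔ AddSubgroup.zmultiples (bstar b b) ⊔ zetaSubgroup A k

theorem bstar_mem_zmultiples_sup {b y z : A} (hb : b ∈ zetaSubgroup A (k + 2))
    (hy : y ∈ AddSubgroup.zmultiples b ⊔ zetaSubgroup A (k + 1))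
    (hz : z ∈ AddSubgroup.zmultiples b ⊔ zetaSubgroup A (k + 1)) :
    bstar y z ∈ AddSubgroup.zmultiples (bstar b b) ⊔ zetaSubgroup A k := by
  obtain ⟨_, hs, v, hv, rfl⟩ := AddSubgroup.mem_sup.1 hy
  obtain ⟨s, rfl⟩ := AddSubgroup.mem_zmultiples_iff.1 hs
  obtain ⟨_, hσ, w, hw, rfl⟩ := AddSubgroup.mem_sup.1 hz
  obtain ⟨σ, rfl⟩ := AddSubgroup.mem_zmultiples_iff.1 hσ
  refine AddSubgroup.mem_sup.2 ⟨(σ * s) • bstar b b, AddSubgroup.zsmul_mem_zmultiples _ _, _,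
    ?_, add_sub_cancel _ _⟩
  have h₁ := bstar_add_left_sub_mem (s • b) (σ • b + w) hv
  have h₂ : bstar (s • b) w ∈ zetaSubgroup A k := (mem_zetaSubgroup_succ.1 hw (s • b)).2
  have h₃ := bstar_zsmul_left_sub_mem b hb s
  convert add_mem (add_mem h₁ h₂) (zsmul_mem h₃ σ) using 1
  rw [bstar_add_right (s • b), bstar_zsmul_right, mul_smul, smul_sub]
  abel

theorem isIdeal_starSpan (hT : IsTBrace A) {b : A} (hb : b ∈ zetaSubgroup A (k + 2)) :
    IsIdeal (starSpan k b : Set A) := by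
  let J := AddSubgroup.zmultiples b ⊔ zetaSubgroup A (k + 1)
  have hc : bstar b b ∈ zetaSubgroup A (k + 1) := (mem_zetaSubgroup_succ.1 hb b).1
  have hJ : IsIdeal (J : Set A) := isIdeal_of_zetaSubgroup_le hT le_sup_right
    (sup_le (AddSubgroup.zmultiples_le_of_mem hb) (zetaSubgroup_mono (k + 1).le_succ))
  have hSJ : starSpan k b ≤ J := sup_le
    (sup_le le_sup_left ((AddSubgroup.zmultiples_le_of_mem hc).trans le_sup_right))
    ((zetaSubgroup_mono k.le_succ).trans le_sup_right)
  have hcS : AddSubgroup.zmultiples (bstar b b) ⊔ zetaSubgroup A k ≤ starSpan k b :=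
    sup_le_sup_right le_sup_right _
  refine hT _ J (isIdealIn_of_bstar_mem hSJ hJ.subbrace fun a ha z hz => ?_) hJ
  exact ⟨hcS (bstar_mem_zmultiples_sup hb ha (hSJ hz)),
    hcS (bstar_mem_zmultiples_sup hb (hSJ hz) ha)⟩

theorem bstar_mem_starSpan (hT : IsTBrace A) {b : A} (hb : b ∈ zetaSubgroup A (k + 2))
    (x : A) : bstar b x ∈ starSpan k b ∧ bstar x b ∈ starSpan k b := by
  have hbS : b ∈ starSpan k b :=
    AddSubgroup.mem_sup_left (AddSubgroup.mem_sup_left (AddSubgroup.mem_zmultiples b))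
  exact ⟨(isIdeal_starSpan hT hb).star_mem_right x trivial b hbS,
    (isIdeal_starSpan hT hb).star_mem_left x trivial b hbS⟩

end Ideals

section Periodicity

variable {k : ℕ} {a : A}

theorem exists_sub_zsmul_bstar_self_mem (ha : a ∈ zetaSubgroup A (k + 2))
    (haper : ∀ s : ℤ, s • a ∈ zetaSubgroup A (k + 1) → s = 0) {y : A}
    (hyS : y ∈ starSpan k a) (hy : y ∈ zetaSubgroup A (k + 1)) :
    ∃ t : ℤ, y - t • bstar a a ∈ zetaSubgroup A k := by
  obtain ⟨_, hst, u, hu, rfl⟩ := AddSubgroup.mem_sup.1 hyS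
  obtain ⟨_, hs, _, ht, rfl⟩ := AddSubgroup.mem_sup.1 hst
  obtain ⟨s, rfl⟩ := AddSubgroup.mem_zmultiples_iff.1 hs
  obtain ⟨t, rfl⟩ := AddSubgroup.mem_zmultiples_iff.1 ht
  have hc : bstar a a ∈ zetaSubgroup A (k + 1) := (mem_zetaSubgroup_succ.1 ha a).1
  have hsa : s • a ∈ zetaSubgroup A (k + 1) := by
    convert sub_mem (sub_mem hy (zsmul_mem hc t)) (zetaSubgroup_mono k.le_succ hu) using 1
    abel
  refine ⟨t, ?_⟩
  rwa [haper s hsa, zero_smul, zero_add, add_sub_cancel_left]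

theorem dvd_of_sub_zsmul_bstar_self_mem (ha : a ∈ zetaSubgroup A (k + 2))
    (haper : ∀ s : ℤ, s • a ∈ zetaSubgroup A (k + 1) → s = 0)
    (hcaper : ∀ r : ℤ, r • bstar a a ∈ zetaSubgroup A k → r = 0) {j t : ℤ} (hj : j ≠ 0)
    {y : A} (hyS : y ∈ starSpan k (j • a)) (hy : y ∈ zetaSubgroup A (k + 1))
    (hyt : y - (j * t) • bstar a a ∈ zetaSubgroup A k) : j ∣ t := by
  have hjaper : ∀ s : ℤ, s • j • a ∈ zetaSubgroup A (k + 1) → s = 0 := fun s hs =>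
    (mul_eq_zero.1 (haper _ (by rwa [mul_smul]))).resolve_right hj
  obtain ⟨t', ht'⟩ := exists_sub_zsmul_bstar_self_mem (zsmul_mem ha j) hjaper hyS hy
  have hjj : bstar (j • a) (j • a) - (j * j) • bstar a a ∈ zetaSubgroup A k := by
    rw [bstar_zsmul_right, mul_smul, ← smul_sub]
    exact zsmul_mem (bstar_zsmul_left_sub_mem a ha j) j
  have hr : (j * t - t' * (j * j)) • bstar a a ∈ zetaSubgroup A k := by
    convert add_mem (sub_mem ht' hyt) (zsmul_mem hjj t') using 1
    rw [sub_smul, mul_smul t', smul_sub]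
    abel
  exact ⟨t', mul_left_cancel₀ hj (by linear_combination hcaper _ hr)⟩

theorem mem_zetaSubgroup_of_forall_zsmul (ha : a ∈ zetaSubgroup A (k + 2))
    (haper : ∀ s : ℤ, s • a ∈ zetaSubgroup A (k + 1) → s = 0)
    (hcaper : ∀ r : ℤ, r • bstar a a ∈ zetaSubgroup A k → r = 0) {y : A}
    (hyS : y ∈ starSpan k a) (hy : y ∈ zetaSubgroup A (k + 1))
    (hmul : ∀ j : ℤ, j ≠ 0 → ∃ y' ∈ starSpan k (j • a),
      y' ∈ zetaSubgroup A (k + 1) ∧ y' - j • y ∈ zetaSubgroup A k) :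
    y ∈ zetaSubgroup A k := by
  obtain ⟨t, ht⟩ := exists_sub_zsmul_bstar_self_mem ha haper hyS hy
  have hdvd : ∀ j : ℤ, j ≠ 0 → j ∣ t := fun j hj => by
    obtain ⟨y', hy'S, hy', hy'y⟩ := hmul j hj
    refine dvd_of_sub_zsmul_bstar_self_mem ha haper hcaper hj hy'S hy' ?_
    convert add_mem hy'y (zsmul_mem ht j) using 1
    rw [mul_smul, smul_sub]
    abel
  have ht0 : t = 0 :=
    Int.eq_zero_of_dvd_of_natAbs_lt_natAbs (hdvd (t.natAbs + 1) (by omega)) (by omega)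
  simpa [ht0] using ht

theorem zsmul_mem_zetaSubgroup_succ (hT : IsTBrace A) (ha : a ∈ zetaSubgroup A (k + 2))
    (haper : ∀ s : ℤ, s • a ∈ zetaSubgroup A (k + 1) → s = 0) {r : ℤ}
    (hr : r • bstar a a ∈ zetaSubgroup A k) : r • a ∈ zetaSubgroup A (k + 1) := by
  refine mem_zetaSubgroup_succ.2 fun x => ?_
  obtain ⟨hax, hxa⟩ := bstar_mem_starSpan hT ha x
  obtain ⟨t, ht⟩ := exists_sub_zsmul_bstar_self_mem ha haper hax (mem_zetaSubgroup_succ.1 ha x).1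
  obtain ⟨t', ht'⟩ :=
    exists_sub_zsmul_bstar_self_mem ha haper hxa (mem_zetaSubgroup_succ.1 ha x).2
  constructor
  · convert add_mem (add_mem (bstar_zsmul_left_sub_mem x ha r) (zsmul_mem ht r))
      (zsmul_mem hr t) using 1
    rw [smul_sub, smul_comm r t]
    abel
  · rw [bstar_zsmul_right]
    convert add_mem (zsmul_mem ht' r) (zsmul_mem hr t') using 1
    rw [smul_sub, smul_comm r t']
    abel

theorem mem_zetaSubgroup_succ_of_aperiodic (hT : IsTBrace A) (ha : a ∈ zetaSubgroup A (k + 2))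
    (haper : ∀ s : ℤ, s • a ∈ zetaSubgroup A (k + 1) → s = 0)
    (hcaper : ∀ r : ℤ, r • bstar a a ∈ zetaSubgroup A k → r = 0) :
    a ∈ zetaSubgroup A (k + 1) := by
  refine mem_zetaSubgroup_succ.2 fun x => ?_
  obtain ⟨hax, hxa⟩ := bstar_mem_starSpan hT ha x
  refine ⟨mem_zetaSubgroup_of_forall_zsmul ha haper hcaper hax (mem_zetaSubgroup_succ.1 ha x).1
      fun j _ => ?_,
    mem_zetaSubgroup_of_forall_zsmul ha haper hcaper hxa (mem_zetaSubgroup_succ.1 ha x).2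
      fun j _ => ?_⟩
  · have hja := zsmul_mem ha j
    exact ⟨_, (bstar_mem_starSpan hT hja x).1, (mem_zetaSubgroup_succ.1 hja x).1,
      bstar_zsmul_left_sub_mem x ha j⟩
  · have hja := zsmul_mem ha j
    refine ⟨_, (bstar_mem_starSpan hT hja x).2, (mem_zetaSubgroup_succ.1 hja x).2, ?_⟩
    rw [bstar_zsmul_right, sub_self]
    exact zero_mem _

theorem exists_nsmul_mem_zetaSubgroup_succ (hT : IsTBrace A) (ha : a ∈ zetaSubgroup A (k + 2)) :
    ∃ m : ℕ, 0 < m ∧ m • a ∈ zetaSubgroup A (k + 1) := by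
  by_contra hnone
  have haper : ∀ s : ℤ, s • a ∈ zetaSubgroup A (k + 1) → s = 0 := fun s hs =>
    by_contra fun hs0 => hnone (AddSubgroup.exists_nsmul_mem_of_zsmul_mem hs0 hs)
  by_cases hc : ∃ r : ℤ, r ≠ 0 ∧ r • bstar a a ∈ zetaSubgroup A k
  · obtain ⟨r, hr, hrc⟩ := hc
    exact hr (haper r (zsmul_mem_zetaSubgroup_succ hT ha haper hrc))
  · have hcaper : ∀ r : ℤ, r • bstar a a ∈ zetaSubgroup A k → r = 0 := fun r hr =>
      by_contra fun hr0 => hc ⟨r, hr0, hr⟩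
    exact hnone ⟨1, one_pos, by simpa using mem_zetaSubgroup_succ_of_aperiodic hT ha haper hcaper⟩

end Periodicity

end LeftBrace

open LeftBrace in
/-- **Proposition.** Let `A` be a T-brace.  Then for every natural `n` the additive group
of `ζ_n(⋆,A)/ζ(⋆,A)` is periodic: for every `a ∈ ζ_n(⋆,A)` there is a positive integer
`m` with `m • a ∈ ζ(⋆,A)`. -/
theorem zetaNat_div_starCenter_periodic
    {A : Type u} [LeftBrace A] (hT : IsTBrace A) (n : ℕ) :
    ∀ a ∈ zetaNat A n, ∃ m : ℕ, 0 < m ∧ m • a ∈ starCenter A := by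
  change ∀ a ∈ zetaSubgroup A n, ∃ m : ℕ, 0 < m ∧ m • a ∈ zetaSubgroup A 1
  induction n with
  | zero => exact fun a ha => ⟨1, one_pos, by rw [one_smul]; exact zetaSubgroup_mono zero_le_one ha⟩
  | succ n ih =>
    intro a ha
    rcases n with _ | k
    · exact ⟨1, one_pos, by rwa [one_smul]⟩
    · obtain ⟨m, hm, hma⟩ := exists_nsmul_mem_zetaSubgroup_succ hT ha
      obtain ⟨m', hm', hm'a⟩ := ih _ hma
      exact ⟨m' * m, Nat.mul_pos hm' hm, by rwa [mul_smul]⟩
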